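/- Picard-Fuchs system: let H(x,y) = y²/2 − x²/2 + x⁴/4 and for h > 0 let γ(h) be the real oval {H = h}. Define I₀(h) = ∮_{γ(h)} y dx and I₂(h) = ∮_{γ(h)} x² y dx. Then these Abelian integrals satisfy the linear system 4h·I₀′(h) + I₂′(h) = 3·I₀(h) and 4h·I₀′(h) + (12h + 4)·I₂′(h) = 15·I₂(h) for all h > 0. -/

import Mathlib

/-! Substituting `x = √(2c) t` with `h = c (c - 1)`, `c > 1`, gives `I₀ = 4c J₀(c)` and
`I₂ = 8c² J₂(c)`, where `J_k(c) = ∫_{-1}^{1} t ^ k √(1 - t²) √q` and `q = c (1 + t²) - 1 > 0`.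
Writing `√q = q / √q` and differentiating under the integral sign express `J₀, J₂` and their
`c`-derivatives through the moments `M_k = ∫_{-1}^{1} t ^ k √(1 - t²) / √q`, `k = 0, 2, 4`. These
satisfy one linear relation from an integration by parts, and both Picard–Fuchs equations are
multiples of it. -/

/-- For the eight-loop Hamiltonian `H = y²/2 − x²/2 + x⁴/4` and `h > 0`, the exterior
oval `{H = h}` is `y² = 2h + x² − x⁴/2`, `|x| ≤ a h` where `a h` is the positive root
of `x⁴/4 − x²/2 = h`. -/
noncomputable def a (h : ℝ) : ℝ := Real.sqrt (1 + Real.sqrt (1 + 4*h))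

/-- `I₀(h) = ∮_{γ(h)} y dx`, written via the symmetric parametrization of the oval. -/
noncomputable def I₀ (h : ℝ) : ℝ :=
  2 * ∫ x in (-(a h))..(a h), Real.sqrt (2*h + x^2 - x^4/2)

/-- `I₂(h) = ∮_{γ(h)} x²y dx`. -/
noncomputable def I₂ (h : ℝ) : ℝ :=
  2 * ∫ x in (-(a h))..(a h), x^2 * Real.sqrt (2*h + x^2 - x^4/2)

open MeasureTheory Set Metric Topology

theorem hasDerivAt_intervalIntegral_of_continuousOn {F F' : ℝ → ℝ → ℝ} {x₀ r a b : ℝ}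
    (hr : 0 < r) (hF : ∀ x ∈ ball x₀ r, ContinuousOn (F x) (uIcc a b))
    (hF' : ContinuousOn (Function.uncurry F') (closedBall x₀ r ×ˢ uIcc a b))
    (hderiv : ∀ x ∈ ball x₀ r, ∀ t ∈ uIcc a b, HasDerivAt (F · t) (F' x t) x) :
    HasDerivAt (fun x => ∫ t in a..b, F x t) (∫ t in a..b, F' x₀ t) x₀ := by
  obtain ⟨C, hC⟩ :=
    ((isCompact_closedBall x₀ r).prod isCompact_uIcc).exists_bound_of_continuousOn hF'
  have hF'₀ : ContinuousOn (F' x₀) (uIcc a b) :=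
    hF'.comp (f := fun t => (x₀, t)) (by fun_prop) fun t ht => ⟨mem_closedBall_self hr.le, ht⟩
  refine (intervalIntegral.hasDerivAt_integral_of_dominated_loc_of_deriv_le
    (bound := fun _ => C) (ball_mem_nhds x₀ hr) ?_
    (hF x₀ (mem_ball_self hr)).intervalIntegrable
    ((hF'₀.aestronglyMeasurable measurableSet_uIcc).mono_set uIoc_subset_uIcc) ?_
    intervalIntegrable_const ?_).2
  · filter_upwards [ball_mem_nhds x₀ hr] with x hx
    exact ((hF x hx).aestronglyMeasurable measurableSet_uIcc).mono_set uIoc_subset_uIcc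
  · exact ae_of_all _ fun t ht x hx =>
      hC (x, t) ⟨ball_subset_closedBall hx, uIoc_subset_uIcc ht⟩
  · exact ae_of_all _ fun t ht x hx => hderiv x hx t (uIoc_subset_uIcc ht)

namespace EightLoop

noncomputable def ovalScale (h : ℝ) : ℝ := (1 + √(1 + 4 * h)) / 2

noncomputable def J (k : ℕ) (c : ℝ) : ℝ :=
  ∫ t in (-1 : ℝ)..1, t ^ k * √(1 - t ^ 2) * √(c * (1 + t ^ 2) - 1)

noncomputable def M (k : ℕ) (c : ℝ) : ℝ :=
  ∫ t in (-1 : ℝ)..1, t ^ k * √(1 - t ^ 2) / √(c * (1 + t ^ 2) - 1)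

theorem ovalScale_mul_sub_one {h : ℝ} (hh : -1 / 4 ≤ h) : ovalScale h * (ovalScale h - 1) = h := by
  have hs := Real.sq_sqrt (by linarith : 0 ≤ 1 + 4 * h)
  unfold ovalScale
  linear_combination hs / 4

theorem ovalScale_mul_sub_one_self {c : ℝ} (hc : 1 / 2 ≤ c) : ovalScale (c * (c - 1)) = c := by
  rw [ovalScale, show 1 + 4 * (c * (c - 1)) = (2 * c - 1) ^ 2 by ring,
    Real.sqrt_sq (by linarith)]
  ring

theorem one_lt_ovalScale {h : ℝ} (hh : 0 < h) : 1 < ovalScale h := by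
  have : 1 < √(1 + 4 * h) := by
    rw [Real.lt_sqrt zero_le_one]; linarith
  unfold ovalScale; linarith

theorem hasDerivAt_ovalScale {h : ℝ} (hh : -1 / 4 < h) :
    HasDerivAt ovalScale (1 / (2 * ovalScale h - 1)) h := by
  have hpos : 0 < 1 + 4 * h := by linarith
  have hs := ((hasDerivAt_id h).const_mul 4).const_add 1 |>.sqrt hpos.ne'
  refine ((hs.const_add 1).div_const 2 : HasDerivAt ovalScale _ h).congr_deriv ?_
  have : 2 * ovalScale h - 1 = √(1 + 4 * h) := by rw [ovalScale]; ring
  rw [this, id]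
  field_simp
  norm_num

theorem a_eq_sqrt_ovalScale (h : ℝ) : a h = √(2 * ovalScale h) := by
  unfold a ovalScale; ring_nf

theorem a_mul_sub_one {c : ℝ} (hc : 1 / 2 ≤ c) : a (c * (c - 1)) = √(2 * c) := by
  rw [a_eq_sqrt_ovalScale, ovalScale_mul_sub_one_self hc]

theorem hasDerivAt_of_comp_mul_sub_one {f g : ℝ → ℝ} {g' c : ℝ}
    (hfg : ∀ c, 1 < c → f (c * (c - 1)) = g c) (hg : HasDerivAt g g' c) (hc : 1 < c) :
    HasDerivAt f (g' / (2 * c - 1)) (c * (c - 1)) := by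
  have hc' : 1 / 2 ≤ c := by linarith
  have hev : g ∘ ovalScale =ᶠ[𝓝 (c * (c - 1))] f := by
    filter_upwards [eventually_gt_nhds (by nlinarith : 0 < c * (c - 1))] with h hh
    rw [Function.comp, ← hfg _ (one_lt_ovalScale hh), ovalScale_mul_sub_one (by linarith)]
  have hs := hasDerivAt_ovalScale (by nlinarith : -1 / 4 < c * (c - 1))
  rw [ovalScale_mul_sub_one_self hc'] at hs
  rw [← ovalScale_mul_sub_one_self hc'] at hg
  exact ((hg.comp _ hs).congr_of_eventuallyEq hev.symm).congr_deriv (by ring)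

theorem integral_pow_mul_sqrt_eq (k : ℕ) {c h : ℝ} (hc : 0 ≤ c) (hh : c * (c - 1) = h) :
    ∫ x in -√(2 * c)..√(2 * c), x ^ k * √(2 * h + x ^ 2 - x ^ 4 / 2)
      = √(2 * c) ^ (k + 2) * J k c := by
  have hs := Real.sq_sqrt (by linarith : 0 ≤ 2 * c)
  have hsub := intervalIntegral.smul_integral_comp_mul_left (a := -1) (b := 1)
    (fun x => x ^ k * √(2 * h + x ^ 2 - x ^ 4 / 2)) √(2 * c)
  rw [mul_neg_one, mul_one] at hsub
  rw [← hsub, smul_eq_mul, J, ← intervalIntegral.integral_const_mul,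
    ← intervalIntegral.integral_const_mul]
  refine intervalIntegral.integral_congr fun t ht => ?_
  have hp : 0 ≤ 1 - t ^ 2 := by
    rw [uIcc_of_le (by norm_num)] at ht
    nlinarith [ht.1, ht.2]
  have hfactor : 2 * h + (√(2 * c) * t) ^ 2 - (√(2 * c) * t) ^ 4 / 2
      = 2 * c * ((1 - t ^ 2) * (c * (1 + t ^ 2) - 1)) := by
    rw [mul_pow, mul_pow, show √(2 * c) ^ 4 = (√(2 * c) ^ 2) ^ 2 by ring, hs, ← hh]
    ring
  rw [hfactor, Real.sqrt_mul (by linarith) ((1 - t ^ 2) * _), Real.sqrt_mul hp]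
  ring

theorem I₀_mul_sub_one {c : ℝ} (hc : 1 / 2 ≤ c) : I₀ (c * (c - 1)) = 4 * c * J 0 c := by
  have hint := integral_pow_mul_sqrt_eq 0 (by linarith) rfl
  simp only [pow_zero, one_mul, zero_add] at hint
  rw [I₀, a_mul_sub_one hc, hint, Real.sq_sqrt (by linarith)]
  ring

theorem I₂_mul_sub_one {c : ℝ} (hc : 1 / 2 ≤ c) : I₂ (c * (c - 1)) = 8 * c ^ 2 * J 2 c := by
  rw [I₂, a_mul_sub_one hc, integral_pow_mul_sqrt_eq 2 (by linarith) rfl,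
    show √(2 * c) ^ (2 + 2) = (√(2 * c) ^ 2) ^ 2 by ring, Real.sq_sqrt (by linarith)]
  ring

theorem mul_one_add_sq_sub_one_pos {c : ℝ} (hc : 1 < c) (t : ℝ) : 0 < c * (1 + t ^ 2) - 1 := by
  nlinarith [sq_nonneg t]

theorem continuous_momentIntegrand (k : ℕ) {c : ℝ} (hc : 1 < c) :
    Continuous fun t : ℝ => t ^ k * √(1 - t ^ 2) / √(c * (1 + t ^ 2) - 1) :=
  Continuous.div (by fun_prop) (by fun_prop) fun t =>
    (Real.sqrt_pos.2 (mul_one_add_sq_sub_one_pos hc t)).ne'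

theorem integral_momentIntegrand_mul (k : ℕ) {c : ℝ} (hc : 1 < c) (α β γ : ℝ) :
    ∫ t in (-1 : ℝ)..1,
        t ^ k * √(1 - t ^ 2) / √(c * (1 + t ^ 2) - 1) * (α + β * t ^ 2 + γ * t ^ 4)
      = α * M k c + β * M (k + 2) c + γ * M (k + 4) c := by
  have hint (n : ℕ) (δ : ℝ) :=
    ((continuous_momentIntegrand n hc).const_mul δ).intervalIntegrable (μ := volume) (-1) 1
  simp only [M, ← intervalIntegral.integral_const_mul]
  rw [← intervalIntegral.integral_add (hint k α) (hint (k + 2) β),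
    ← intervalIntegral.integral_add ((hint k α).add (hint (k + 2) β)) (hint (k + 4) γ)]
  congr 1 with t
  ring

theorem J_eq (k : ℕ) {c : ℝ} (hc : 1 < c) : J k c = (c - 1) * M k c + c * M (k + 2) c := by
  rw [← add_zero (_ + _), ← zero_mul (M (k + 4) c), ← integral_momentIntegrand_mul k hc, J]
  congr 1 with t
  have hq := mul_one_add_sq_sub_one_pos hc t
  have hsq := Real.sq_sqrt hq.le
  have hsq_pos := Real.sqrt_pos.2 hq
  field_simp
  linear_combination (t ^ k * √(1 - t ^ 2)) * hsq

theorem hasDerivAt_J (k : ℕ) {c : ℝ} (hc : 1 < c) :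
    HasDerivAt (J k) ((M k c + M (k + 2) c) / 2) c := by
  have hr : 0 < (c - 1) / 2 := by linarith
  have hx : ∀ x ∈ closedBall c ((c - 1) / 2), 1 < x := fun x hx => by
    rw [mem_closedBall, Real.dist_eq, abs_le] at hx; linarith
  have hJ := hasDerivAt_intervalIntegral_of_continuousOn (x₀ := c) (a := -1) (b := 1) hr
    (F := fun x t => t ^ k * √(1 - t ^ 2) * √(x * (1 + t ^ 2) - 1))
    (F' := fun x t => t ^ k * √(1 - t ^ 2) / √(x * (1 + t ^ 2) - 1) *
      (1 / 2 + 1 / 2 * t ^ 2 + 0 * t ^ 4))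
    (fun x _ => (by fun_prop : Continuous _).continuousOn) ?_ ?_
  · rw [integral_momentIntegrand_mul k hc] at hJ
    exact hJ.congr_deriv (by ring)
  · show ContinuousOn (fun p : ℝ × ℝ => p.2 ^ k * √(1 - p.2 ^ 2) / √(p.1 * (1 + p.2 ^ 2) - 1) *
      (1 / 2 + 1 / 2 * p.2 ^ 2 + 0 * p.2 ^ 4)) _
    refine ContinuousOn.mul (ContinuousOn.div (by fun_prop) (by fun_prop) ?_) (by fun_prop)
    exact fun p hp => (Real.sqrt_pos.2 (mul_one_add_sq_sub_one_pos (hx p.1 hp.1) p.2)).ne'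
  · intro x hxb t _
    have hq := mul_one_add_sq_sub_one_pos (hx x (ball_subset_closedBall hxb)) t
    have hsq_pos := Real.sqrt_pos.2 hq
    refine (((((hasDerivAt_id' x).mul_const (1 + t ^ 2)).sub_const 1).sqrt hq.ne').const_mul
      (t ^ k * √(1 - t ^ 2))).congr_deriv ?_
    field_simp
    ring

/-- Integrate the derivative of `t ^ (k + 1) (1 - t²)^{3/2} √q`, which vanishes at `t = ±1`. -/
theorem moment_recurrence (k : ℕ) {c : ℝ} (hc : 1 < c) :
    (k + 1) * (c - 1) * M k c + (k + 4 - 2 * c) * M (k + 2) c - (k + 5) * c * M (k + 4) c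
      = 0 := by
  let G : ℝ → ℝ := fun t => t ^ (k + 1) * (1 - t ^ 2) * √(1 - t ^ 2) * √(c * (1 + t ^ 2) - 1)
  have hG : ∀ t ∈ Ioo (-1 : ℝ) 1, HasDerivAt G (t ^ k * √(1 - t ^ 2) / √(c * (1 + t ^ 2) - 1) *
      ((k + 1) * (c - 1) + (k + 4 - 2 * c) * t ^ 2 + -((k + 5) * c) * t ^ 4)) t := by
    intro t ht
    have hp : 0 < 1 - t ^ 2 := by nlinarith [ht.1, ht.2]
    have hq := mul_one_add_sq_sub_one_pos hc t
    have hdp := (hasDerivAt_pow 2 t).const_sub 1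
    have hdq := (((hasDerivAt_pow 2 t).const_add 1).const_mul c).sub_const 1
    refine ((((hasDerivAt_pow (k + 1) t).mul hdp).mul (hdp.sqrt hp.ne')).mul
      (hdq.sqrt hq.ne')).congr_deriv ?_
    have hsp := Real.sq_sqrt hp.le
    have hsq := Real.sq_sqrt hq.le
    have hsp_pos := Real.sqrt_pos.2 hp
    have hsq_pos := Real.sqrt_pos.2 hq
    field_simp
    simp only [Pi.mul_apply, Nat.add_sub_cancel, Nat.cast_add, Nat.cast_one, Nat.cast_ofNat,
      Nat.reduceSub, pow_one]
    rw [hsp, hsq]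
    linear_combination (2 * t * c * t ^ (k + 1) * (1 - t ^ 2)) * hsp
  have hFTC := intervalIntegral.integral_eq_sub_of_hasDerivAt_of_le (by norm_num) (by fun_prop)
    hG (((continuous_momentIntegrand k hc).mul (by fun_prop)).intervalIntegrable _ _)
  rw [integral_momentIntegrand_mul k hc] at hFTC
  simp only [G, neg_one_sq, one_pow, sub_self, Real.sqrt_zero, mul_zero, zero_mul] at hFTC
  linear_combination hFTC

end EightLoop

open EightLoop

/-- Picard–Fuchs system for the Abelian integrals on the exterior annulus of the
eight loop:  `4h·I₀′ + I₂′ = 3I₀` and `4h·I₀′ + (12h+4)·I₂′ = 15I₂` for `h > 0`. -/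
theorem picard_fuchs : ∀ h : ℝ, 0 < h →
    4*h * deriv I₀ h + deriv I₂ h = 3 * I₀ h
  ∧ 4*h * deriv I₀ h + (12*h + 4) * deriv I₂ h = 15 * I₂ h := by
  intro h hh
  obtain ⟨c, hc, rfl⟩ : ∃ c, 1 < c ∧ c * (c - 1) = h :=
    ⟨ovalScale h, one_lt_ovalScale hh, ovalScale_mul_sub_one (by linarith)⟩
  have hI₀ := hasDerivAt_of_comp_mul_sub_one (fun c hc => I₀_mul_sub_one (by linarith))
    (((hasDerivAt_id' c).const_mul 4).mul (hasDerivAt_J 0 hc)) hc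
  have hI₂ := hasDerivAt_of_comp_mul_sub_one (fun c hc => I₂_mul_sub_one (by linarith))
    (((hasDerivAt_pow 2 c).const_mul 8).mul (hasDerivAt_J 2 hc)) hc
  have hrec := moment_recurrence 0 hc
  have h2c : 2 * c - 1 ≠ 0 := by linarith
  rw [hI₀.deriv, hI₂.deriv, I₀_mul_sub_one (by linarith), I₂_mul_sub_one (by linarith),
    J_eq 0 hc, J_eq 2 hc]
  simp only [Nat.cast_zero, zero_add, one_mul, mul_one, Nat.cast_ofNat, Nat.reduceAdd,
    Nat.reduceSub, pow_one] at hrec ⊢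
  constructor
  · rw [← mul_div_assoc, ← add_div, div_eq_iff h2c]
    linear_combination (-4 * c) * hrec
  · rw [← mul_div_assoc, ← mul_div_assoc (12 * (c * (c - 1)) + 4), ← add_div, div_eq_iff h2c]
    linear_combination (4 * c * (6 * c - 4)) * hrec
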